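/- For any finite sequence τ of distinct natural numbers and any natural number k not occurring in τ, aid f(k,τ) = aid τ + |τ_{<k}|, where |τ_{<k}| denotes the number of letters of τ that are less than k. -/

import Mathlib

/-!
Split a word with distinct letters as `α m β` at its smallest letter `m`. The descents and
admissible inversions of `α m β` are those of `α` and of `β`, together with the descent into `m`
(if `α ≠ ∅`), the inversions `(a, m)`, `a ∈ α` (admissible, through the ascent after `m`, exactly
when `β ≠ ∅`), and all inversions from `α` into `β` (admissible through `m`). Hence

  `aid (α m β) = aid α + aid β + [α ≠ ∅] + [β ≠ ∅] |α| + #{(a, b) ∈ α × β | b < a}`.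

For `k > m` every clause of `f(k, τ)` again has this shape, with `f(k, α)` or `f(k, β)`, a
rearrangement of `kα` or `kβ`, in place of `α` or `β`; the formula and induction give the claim.
For `k < m`, `f(k, τ) = kτ` and the letter `k` contributes nothing.
-/

namespace PaperStats

/-- `des w` is the number of descents of the word `w` (0-indexed positions `i`
with `w(i) > w(i+1)`). -/
def des (w : List ℕ) : ℕ :=
  ((Finset.range (w.length - 1)).filter fun i => w.getD (i + 1) 0 < w.getD i 0).card

/-- `inv w` is the number of inversions of the word `w`: pairs of positions
`i < j` with `w(i) > w(j)`. -/
def inv (w : List ℕ) : ℕ :=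
  ((Finset.range w.length ×ˢ Finset.range w.length).filter
    fun p => p.1 < p.2 ∧ w.getD p.2 0 < w.getD p.1 0).card

/-- An inversion `(i,j)` of `w` is admissible if either `w(j) < w(j+1)`
(`j` is not the last position and is followed by an ascent), or there is a
position `k` strictly between `i` and `j` with `w(j) > w(k)`. -/
def IsAdmissible (w : List ℕ) (i j : ℕ) : Prop :=
  (j + 1 < w.length ∧ w.getD j 0 < w.getD (j + 1) 0) ∨
    ∃ k, i < k ∧ k < j ∧ w.getD k 0 < w.getD j 0

instance (w : List ℕ) (i j : ℕ) : Decidable (IsAdmissible w i j) :=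
  decidable_of_iff ((j + 1 < w.length ∧ w.getD j 0 < w.getD (j + 1) 0) ∨
      ∃ k ∈ Finset.Ioo i j, w.getD k 0 < w.getD j 0) (by
    unfold IsAdmissible
    simp only [Finset.mem_Ioo, and_assoc])

/-- `ai w` is the number of admissible inversions of `w`. -/
def ai (w : List ℕ) : ℕ :=
  ((Finset.range w.length ×ˢ Finset.range w.length).filter
    fun p => p.1 < p.2 ∧ w.getD p.2 0 < w.getD p.1 0 ∧ IsAdmissible w p.1 p.2).card

/-- `aid w = ai w + des w`. -/
def aid (w : List ℕ) : ℕ := ai w + des w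

/-- The statistic `aix`, defined recursively: `aix ∅ = 0`; writing a nonempty
word as `π = α m β`, where `m` is the smallest letter and `α` is the maximal
prefix not containing `m`, one has `aix π = 1 + aix β` if `α = ∅`,
`aix π = 0` if `β = ∅` (and `α ≠ ∅`), and `aix π = aix α` otherwise. -/
def aix : List ℕ → ℕ
  | [] => 0
  | x :: xs =>
    if (x :: xs).takeWhile (fun a => decide (a ≠ xs.foldr min x)) = [] then
      1 + aix (((x :: xs).dropWhile (fun a => decide (a ≠ xs.foldr min x))).tail)
    else if ((x :: xs).dropWhile (fun a => decide (a ≠ xs.foldr min x))).tail = [] then 0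
    else aix ((x :: xs).takeWhile (fun a => decide (a ≠ xs.foldr min x)))
termination_by w => w.length
decreasing_by
  all_goals have e : List.foldr (fun (y : {y // y ∈ xs}) s => min y.1 s) x xs.attach = xs.foldr min x :=
    List.foldr_attach
  all_goals simp only [e] at *
  · have h1 := (List.dropWhile_sublist (l := x :: xs) (fun a => decide (a ≠ xs.foldr min x))).length_le
    have h2 := List.length_tail (l := (x :: xs).dropWhile (fun a => decide (a ≠ xs.foldr min x)))
    simp only [List.length_cons] at *
    omega
  · rename_i hα hβ
    have h0 : ((x :: xs).takeWhile (fun a => decide (a ≠ xs.foldr min x))) ++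
        ((x :: xs).dropWhile (fun a => decide (a ≠ xs.foldr min x))) = x :: xs :=
      List.takeWhile_append_dropWhile ..
    have h1 : ((x :: xs).dropWhile (fun a => decide (a ≠ xs.foldr min x))) ≠ [] := by
      intro h
      apply hβ
      rw [h]
      rfl
    have h2 := congrArg List.length h0
    simp only [List.length_append, List.length_cons] at h2
    have h3 : 0 < ((x :: xs).dropWhile (fun a => decide (a ≠ xs.foldr min x))).length :=
      List.length_pos_iff.mpr h1
    simp only [List.length_cons]
    omega

/-- The map `f(k,τ)`: with `m` the smallest letter of `τ` together with `k`
(`k` not occurring in `τ`), and `τ = α m β` with `α` the maximal prefix of `τ`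
avoiding `m`: `f(k,∅) = k`; `f(k,τ) = kτ` if `k = m`; and for `k > m`,
`f(k,τ) = f(k,β) m` if `α = ∅`, `f(k,τ) = k m α` if `β = ∅`, and
`f(k,τ) = f(k,α) m β` otherwise. -/
def fkt (k : ℕ) : List ℕ → List ℕ
  | [] => [k]
  | x :: xs =>
    if k < xs.foldr min x then k :: x :: xs
    else if (x :: xs).takeWhile (fun a => decide (a ≠ xs.foldr min x)) = [] then
      fkt k (((x :: xs).dropWhile (fun a => decide (a ≠ xs.foldr min x))).tail) ++
        [xs.foldr min x]
    else if ((x :: xs).dropWhile (fun a => decide (a ≠ xs.foldr min x))).tail = [] then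
      k :: xs.foldr min x :: ((x :: xs).takeWhile (fun a => decide (a ≠ xs.foldr min x)))
    else
      fkt k ((x :: xs).takeWhile (fun a => decide (a ≠ xs.foldr min x))) ++
        xs.foldr min x :: ((x :: xs).dropWhile (fun a => decide (a ≠ xs.foldr min x))).tail
termination_by w => w.length
decreasing_by
  all_goals have e : List.foldr (fun (y : {y // y ∈ xs}) s => min y.1 s) x xs.attach = xs.foldr min x :=
    List.foldr_attach
  all_goals simp only [e] at *
  · have h1 := (List.dropWhile_sublist (l := x :: xs) (fun a => decide (a ≠ xs.foldr min x))).length_le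
    have h2 := List.length_tail (l := (x :: xs).dropWhile (fun a => decide (a ≠ xs.foldr min x)))
    simp only [List.length_cons] at *
    omega
  · rename_i hk hα hβ
    have h0 : ((x :: xs).takeWhile (fun a => decide (a ≠ xs.foldr min x))) ++
        ((x :: xs).dropWhile (fun a => decide (a ≠ xs.foldr min x))) = x :: xs :=
      List.takeWhile_append_dropWhile ..
    have h1 : ((x :: xs).dropWhile (fun a => decide (a ≠ xs.foldr min x))) ≠ [] := by
      intro h
      apply hβ
      rw [h]
      rfl
    have h2 := congrArg List.length h0
    simp only [List.length_append, List.length_cons] at h2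
    have h3 : 0 < ((x :: xs).dropWhile (fun a => decide (a ≠ xs.foldr min x))).length :=
      List.length_pos_iff.mpr h1
    simp only [List.length_cons]
    omega

/-- `ini w` is the first letter of `w`. -/
def ini (w : List ℕ) : ℕ := w.headD 0

/-- The word of a permutation `π ∈ S_n`, namely `π(1) π(2) … π(n)`
(with values in `{1, …, n}`). -/
def permList {n : ℕ} (π : Equiv.Perm (Fin n)) : List ℕ :=
  List.ofFn fun i => (π i : ℕ) + 1

/-- The bijection `φ`: `φ(π) = f(π(1), f(π(2), ⋯ f(π(n), ∅) ⋯ ))`. -/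
def phiW (w : List ℕ) : List ℕ := w.foldr fkt []

/-- Helper: `decRun l` splits `l` into its maximal weakly decreasing prefix
and the rest. -/
def decRun : List ℕ → List ℕ × List ℕ
  | [] => ([], [])
  | [x] => ([x], [])
  | x :: y :: rest =>
    if y ≤ x then ((x :: (decRun (y :: rest)).1), (decRun (y :: rest)).2)
    else ([x], y :: rest)

theorem decRun_append : ∀ l : List ℕ, (decRun l).1 ++ (decRun l).2 = l
  | [] => rfl
  | [x] => rfl
  | x :: y :: rest => by
    rw [decRun]
    split
    · simpa using decRun_append (y :: rest)
    · rfl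

/-- Helper computing the hook factorization of a word from its reversal: the
rightmost hook of the word starts at its rightmost descent top, i.e. it is
obtained by extending the maximal weakly decreasing prefix of the reversed word
by one more letter; the process is repeated on what remains, and when no
letters usable for a hook remain the word left over is the increasing part
`π₀`. The result is `(π₀, [π₁, …, π_k])`. -/
def hookRev (r : List ℕ) : List ℕ × List (List ℕ) :=
  match h : (decRun r).2 with
  | [] => (r.reverse, [])
  | z :: rest =>
    ((hookRev rest).1, (hookRev rest).2 ++ [z :: (decRun r).1.reverse])
termination_by r.length
decreasing_by
  have h2 := congrArg List.length (decRun_append r)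
  rw [h] at h2
  simp only [List.length_append, List.length_cons] at h2
  omega

/-- The hook factorization `(π₀, [π₁, …, π_k])` of a word
`w = π₀ π₁ ⋯ π_k`, where `π₀` is increasing and each `π_i`, `i ≥ 1`, is a
hook. -/
def hookSplit (w : List ℕ) : List ℕ × List (List ℕ) := hookRev w.reverse

/-- `pix w` is the length of the initial increasing factor `π₀` in the hook
factorization of `w`. -/
def pix (w : List ℕ) : ℕ := (hookSplit w).1.length

/-- `lec w` is the sum of the numbers of inversions of the hooks in the hook
factorization of `w`. -/
def lec (w : List ℕ) : ℕ := ((hookSplit w).2.map inv).sum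

/-- A word `w(1) … w(r)` with `r ≥ 2` is a hook if
`w(1) > w(2) ≤ w(3) ≤ ⋯ ≤ w(r)`. -/
def IsHook (w : List ℕ) : Prop :=
  ∃ a b rest, w = a :: b :: rest ∧ b < a ∧ List.Chain' (· ≤ ·) (b :: rest)

/-- `w(i)` is a left-to-right maximum of `w` if `w(k) < w(i)` for all `k < i`. -/
def IsLRMax (w : List ℕ) (i : ℕ) : Prop := ∀ k < i, w.getD k 0 < w.getD i 0

instance (w : List ℕ) (i : ℕ) : Decidable (IsLRMax w i) := by
  unfold IsLRMax; infer_instance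

/-- `mix w` counts the pairs of positions `i < j` such that either
`w(i) > w(j)` and `w(i)` is a left-to-right maximum, or `w(i) < w(j)` and
there is `k < i` with `w(k) > w(j)`. -/
def mix (w : List ℕ) : ℕ :=
  ((Finset.range w.length ×ˢ Finset.range w.length).filter fun p =>
    p.1 < p.2 ∧ ((w.getD p.2 0 < w.getD p.1 0 ∧ IsLRMax w p.1) ∨
      (w.getD p.1 0 < w.getD p.2 0 ∧ ∃ k ∈ Finset.range p.1, w.getD p.2 0 < w.getD k 0))).card

/-- `das w` counts the positions `i` such that either `w(i) > w(i+1)` and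
`w(i)` is a left-to-right maximum, or `w(i) < w(i+1)` and there is `k < i`
with `w(k) > w(i+1)`. -/
def das (w : List ℕ) : ℕ :=
  ((Finset.range (w.length - 1)).filter fun i =>
    (w.getD (i + 1) 0 < w.getD i 0 ∧ IsLRMax w i) ∨
      (w.getD i 0 < w.getD (i + 1) 0 ∧ ∃ k ∈ Finset.range i, w.getD (i + 1) 0 < w.getD k 0)).card

/-- The values of the left-to-right maxima of a word, listed in increasing
order (which is also their order of occurrence). -/
def lrMaxima : List ℕ → List ℕ
  | [] => []
  | x :: xs => x :: lrMaxima (xs.filter fun a => decide (x < a))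
termination_by l => l.length
decreasing_by
  have e : (List.filter (fun (y : {y // y ∈ xs}) => decide (x < y.1)) xs.attach).unattach =
      xs.filter (fun a => decide (x < a)) := by
    rw [List.unattach_filter (g := fun a => decide (x < a)) (hf := fun _ _ => rfl), List.unattach_attach]
  rw [e]
  have := xs.length_filter_le (fun a => decide (x < a))
  simp only [List.length_cons]
  omega

/-- `Bset w m` is the list of entries of `w` that are smaller than `m` and lie
to the right of (the first occurrence of) `m` in `w`. -/
def Bset (w : List ℕ) (m : ℕ) : List ℕ :=
  ((w.dropWhile fun a => decide (a ≠ m)).tail).filter fun a => decide (a < m)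

/-- Helper for `psiS`: replace the letters satisfying `P`, in order, by the
letters of the first list. -/
def replaceSub (P : ℕ → Bool) : List ℕ → List ℕ → List ℕ
  | _, [] => []
  | rs, x :: xs =>
    if P x then rs.headD x :: replaceSub P rs.tail xs else x :: replaceSub P rs xs

/-- `psiS S w` is `ψ_S(w)`: the result of reversing, in place, the subword of
`w` consisting of the entries belonging to `S`. -/
def psiS (S : List ℕ) (w : List ℕ) : List ℕ :=
  replaceSub (fun a => decide (a ∈ S)) ((w.filter fun a => decide (a ∈ S)).reverse) w

/-- Helper applying the alternating composition
`ψ_{B₁} ∘ ψ_{B₂ ∩ B₁} ∘ ψ_{B₂} ∘ ⋯ ∘ ψ_{B_{k-1}} ∘ ψ_{B_k ∩ B_{k-1}} ∘ ψ_{B_k}`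
to `w`, given the list `[B_k, B_{k-1}, …, B₁]`. -/
def psiChain : List (List ℕ) → List ℕ → List ℕ
  | [], w => w
  | [B], w => psiS B w
  | B :: B' :: rest, w => psiChain (B' :: rest) (psiS (B.inter B') (psiS B w))

/-- The Brändén–Claesson bijection `ψ`. -/
def psi (w : List ℕ) : List ℕ :=
  psiChain (((lrMaxima w).map (Bset w)).reverse) w

end PaperStats

namespace List

variable {α : Type*}

theorem foldr_min_mem [LinearOrder α] (x : α) (xs : List α) : xs.foldr min x ∈ x :: xs := by
  induction xs with
  | nil => simp
  | cons y ys ih =>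
    rw [foldr_cons]
    rcases min_choice y (ys.foldr min x) with h | h <;> rw [h]
    · simp
    · rcases mem_cons.mp ih with h' | h' <;> simp [h']

theorem foldr_min_le [LinearOrder α] (x : α) (xs : List α) :
    ∀ a ∈ x :: xs, xs.foldr min x ≤ a := by
  induction xs with
  | nil => simp
  | cons y ys ih =>
    simp only [mem_cons, foldr_cons, forall_eq_or_imp] at ih ⊢
    exact ⟨(min_le_right _ _).trans ih.1, min_le_left _ _, fun a ha =>
      (min_le_right _ _).trans (ih.2 a ha)⟩

theorem takeWhile_append_cons_tail_dropWhile [DecidableEq α] {l : List α} {m : α}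
    (hm : m ∈ l) :
    l.takeWhile (fun a => decide (a ≠ m)) ++ m :: (l.dropWhile (fun a => decide (a ≠ m))).tail
      = l := by
  induction l with
  | nil => simp at hm
  | cons a l ih =>
    by_cases ham : a = m
    · simp [ham]
    · have hm' : m ∈ l := (mem_cons.mp hm).resolve_left (Ne.symm ham)
      simpa [takeWhile_cons, dropWhile_cons, ham] using ih hm'

theorem getD_mem {l : List α} {n : ℕ} (d : α) (h : n < l.length) : l.getD n d ∈ l := by
  rw [getD_eq_getElem _ _ h]
  exact getElem_mem h

theorem getD_append_cons_length (γ β : List α) (m d : α) :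
    (γ ++ m :: β).getD γ.length d = m := by
  rw [getD_append_right _ _ _ _ le_rfl, Nat.sub_self, getD_cons_zero]

theorem getD_append_cons_add (γ β : List α) (m d : α) (t : ℕ) :
    (γ ++ m :: β).getD (γ.length + 1 + t) d = β.getD t d := by
  rw [getD_append_right _ _ _ _ (by omega), show γ.length + 1 + t - γ.length = t + 1 by omega,
    getD_cons_succ]

theorem countP_eq_sum_range_getD (p : α → Bool) (l : List α) (d : α) :
    l.countP p = ∑ t ∈ Finset.range l.length, if p (l.getD t d) then 1 else 0 := by
  induction l with
  | nil => simp
  | cons a l ih => rw [countP_cons, length_cons, Finset.sum_range_succ', ih]; simp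

theorem exists_eq_append_cons_forall_lt [LinearOrder α] {l : List α} (hl : l.Nodup)
    (hne : l ≠ []) : ∃ s m t, l = s ++ m :: t ∧ (∀ a ∈ s, m < a) ∧ ∀ b ∈ t, m < b := by
  obtain ⟨s, t, hst⟩ := append_of_mem (min_mem hne)
  have hmin : ∀ a ∈ s ++ l.min hne :: t, l.min hne ≤ a := fun a ha => min_le_of_mem (hst ▸ ha)
  rw [hst, nodup_middle, nodup_cons, mem_append, not_or] at hl
  refine ⟨s, l.min hne, t, hst, fun a ha => ?_, fun b hb => ?_⟩
  · exact (hmin a (by simp [ha])).lt_of_ne (ne_of_mem_of_not_mem ha hl.1.1).symm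
  · exact (hmin b (by simp [hb])).lt_of_ne (ne_of_mem_of_not_mem hb hl.1.2).symm

theorem Nodup.induction_on_min [LinearOrder α] {motive : List α → Prop} {l : List α}
    (hl : l.Nodup) (nil : motive [])
    (append_cons : ∀ s m t, (∀ a ∈ s, m < a) → (∀ b ∈ t, m < b) →
      motive s → motive t → motive (s ++ m :: t)) : motive l := by
  induction h : l.length using Nat.strong_induction_on generalizing l with
  | _ n ih =>
    rcases eq_or_ne l [] with rfl | hne
    · exact nil
    obtain ⟨s, m, t, rfl, hs, ht⟩ := exists_eq_append_cons_forall_lt hl hne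
    simp only [length_append, length_cons] at h
    exact append_cons s m t hs ht (ih _ (by omega) hl.of_append_left rfl)
      (ih _ (by omega) hl.of_append_right.of_cons rfl)

end List

namespace PaperStats

theorem des_nil : des [] = 0 := rfl

theorem des_singleton (a : ℕ) : des [a] = 0 := rfl

theorem des_cons_cons (a b : ℕ) (l : List ℕ) :
    des (a :: b :: l) = des (b :: l) + if b < a then 1 else 0 := by
  simp only [des, List.length_cons, Nat.add_sub_cancel, Finset.card_filter,
    Finset.sum_range_succ', List.getD_cons_succ, List.getD_cons_zero]

theorem des_cons_of_forall_lt {m : ℕ} {β : List ℕ} (hβ : ∀ b ∈ β, m < b) :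
    des (m :: β) = des β := by
  cases β with
  | nil => rfl
  | cons b β => simp [des_cons_cons, (hβ b List.mem_cons_self).not_gt]

theorem des_append_cons {γ β : List ℕ} {m : ℕ} (hγ : ∀ a ∈ γ, m < a) (hβ : ∀ b ∈ β, m < b) :
    des (γ ++ m :: β) = des γ + des β + if γ = [] then 0 else 1 := by
  induction γ with
  | nil => simp [des_cons_of_forall_lt hβ, des_nil]
  | cons a γ ih =>
    simp only [List.mem_cons, forall_eq_or_imp] at hγ
    cases γ with
    | nil => simp [des_cons_cons, des_cons_of_forall_lt hβ, hγ.1, des_singleton]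
    | cons c γ =>
      have ih := ih hγ.2
      rw [List.cons_append] at ih
      simp only [List.cons_append, des_cons_cons, ih, reduceCtorEq, if_false]
      omega

theorem isAdmissible_cons_succ_succ (a : ℕ) (w : List ℕ) (i j : ℕ) :
    IsAdmissible (a :: w) (i + 1) (j + 1) ↔ IsAdmissible w i j := by
  unfold IsAdmissible
  simp only [List.length_cons, List.getD_cons_succ, add_lt_add_iff_right]
  refine or_congr Iff.rfl ⟨fun ⟨k, hik, hkj, h⟩ => ?_, fun ⟨k, hik, hkj, h⟩ =>
    ⟨k + 1, by omega, by omega, by rwa [List.getD_cons_succ]⟩⟩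
  obtain ⟨k, rfl⟩ : ∃ k', k = k' + 1 := ⟨k - 1, by omega⟩
  exact ⟨k, by omega, by omega, by rwa [List.getD_cons_succ] at h⟩

section AppendCons

variable {l β : List ℕ} {m : ℕ}

theorem isAdmissible_append_cons_iff (hl : ∀ a ∈ l, m < a) {i j : ℕ} (hj : j < l.length) :
    IsAdmissible (l ++ m :: β) i j ↔ IsAdmissible l i j := by
  unfold IsAdmissible
  rw [List.getD_append _ _ _ _ hj]
  refine or_congr ?_ (exists_congr fun k => and_congr_right fun hik =>
    and_congr_right fun hkj => by rw [List.getD_append _ _ _ _ (by omega)])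
  rcases Nat.lt_or_ge (j + 1) l.length with hj1 | hj1
  · rw [List.getD_append _ _ _ _ hj1, List.length_append, List.length_cons]
    simp only [hj1, true_and]
    omega
  · rw [show j + 1 = l.length by omega, List.getD_append_cons_length]
    have := hl _ (List.getD_mem 0 hj)
    constructor <;> rintro ⟨h1, h2⟩ <;> omega

theorem isAdmissible_append_cons_length_iff (hl : ∀ a ∈ l, m < a) (hβ : ∀ b ∈ β, m < b)
    (i : ℕ) : IsAdmissible (l ++ m :: β) i l.length ↔ β ≠ [] := by
  unfold IsAdmissible
  rw [List.getD_append_cons_length]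
  constructor
  · rintro (⟨h, -⟩ | ⟨k, -, hk, h⟩)
    · rintro rfl
      simp at h
    · rw [List.getD_append _ _ _ _ hk] at h
      exact absurd (hl _ (List.getD_mem 0 hk)) h.not_gt
  · intro hne
    have hb : 0 < β.length := List.length_pos_iff.mpr hne
    left
    refine ⟨by simp; omega, ?_⟩
    rw [← add_zero (l.length + 1), List.getD_append_cons_add]
    exact hβ _ (List.getD_mem 0 hb)

theorem isAdmissible_append_cons_add (hβ : ∀ b ∈ β, m < b) {i t : ℕ} (hi : i < l.length)
    (ht : t < β.length) : IsAdmissible (l ++ m :: β) i (l.length + 1 + t) := by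
  refine Or.inr ⟨l.length, hi, by omega, ?_⟩
  rw [List.getD_append_cons_length, List.getD_append_cons_add]
  exact hβ _ (List.getD_mem 0 ht)

end AppendCons

def admInvFrom (a : ℕ) (w : List ℕ) : ℕ :=
  ((Finset.range w.length).filter fun j => w.getD j 0 < a ∧ IsAdmissible (a :: w) 0 (j + 1)).card

theorem ai_cons (a : ℕ) (w : List ℕ) : ai (a :: w) = ai w + admInvFrom a w := by
  simp only [ai, admInvFrom, Finset.card_filter, Finset.sum_product, List.length_cons,
    Finset.sum_range_succ', List.getD_cons_succ, List.getD_cons_zero,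
    isAdmissible_cons_succ_succ, add_lt_add_iff_right]
  simp

theorem admInvFrom_eq_zero {a : ℕ} {w : List ℕ} (h : ∀ b ∈ w, a < b) : admInvFrom a w = 0 := by
  rw [admInvFrom, Finset.card_eq_zero, Finset.filter_eq_empty_iff]
  rintro j hj ⟨hlt, -⟩
  exact (h _ (List.getD_mem 0 (Finset.mem_range.mp hj))).not_gt hlt

theorem admInvFrom_append_cons {a m : ℕ} {γ β : List ℕ} (hma : m < a) (hγ : ∀ b ∈ γ, m < b)
    (hβ : ∀ b ∈ β, m < b) :
    admInvFrom a (γ ++ m :: β)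
      = admInvFrom a γ + (if β = [] then 0 else 1) + β.countP (· < a) := by
  have hl : ∀ b ∈ a :: γ, m < b := List.forall_mem_cons.mpr ⟨hma, hγ⟩
  have hw : a :: (γ ++ m :: β) = (a :: γ) ++ m :: β := rfl
  rw [admInvFrom, admInvFrom, Finset.card_filter, Finset.card_filter, hw, List.length_append,
    List.length_cons, show γ.length + (β.length + 1) = γ.length + 1 + β.length by omega,
    Finset.sum_range_add, Finset.sum_range_succ, List.countP_eq_sum_range_getD _ _ 0]
  congr 1
  congr 1
  · refine Finset.sum_congr rfl fun j hj => ?_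
    have hj : j < γ.length := Finset.mem_range.mp hj
    rw [List.getD_append _ _ _ _ hj]
    exact if_congr (and_congr_right fun _ => isAdmissible_append_cons_iff hl (by simpa using hj))
      rfl rfl
  · have hadm := isAdmissible_append_cons_length_iff hl hβ 0
    rw [List.length_cons] at hadm
    simp only [List.getD_append_cons_length, hma, true_and, hadm, ite_not]
  · refine Finset.sum_congr rfl fun t ht => ?_
    have hadm := isAdmissible_append_cons_add (l := a :: γ) hβ (i := 0) (by simp)
      (Finset.mem_range.mp ht)
    rw [List.length_cons, show γ.length + 1 + 1 + t = γ.length + 1 + t + 1 by omega] at hadm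
    simp only [List.getD_append_cons_add, hadm, and_true, decide_eq_true_eq]

def crossInv (γ β : List ℕ) : ℕ := (γ.map fun a => β.countP (· < a)).sum

theorem crossInv_cons (a : ℕ) (γ β : List ℕ) :
    crossInv (a :: γ) β = β.countP (· < a) + crossInv γ β := by
  simp [crossInv]

theorem crossInv_eq_of_perm {γ γ' : List ℕ} (h : γ.Perm γ') (β : List ℕ) :
    crossInv γ β = crossInv γ' β :=
  (h.map _).sum_eq

theorem ai_append_cons {γ β : List ℕ} {m : ℕ} (hγ : ∀ a ∈ γ, m < a) (hβ : ∀ b ∈ β, m < b) :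
    ai (γ ++ m :: β) = ai γ + ai β + (if β = [] then 0 else γ.length) + crossInv γ β := by
  induction γ with
  | nil =>
    rw [List.nil_append, ai_cons, admInvFrom_eq_zero hβ]
    simp [crossInv, show ai [] = 0 from rfl]
  | cons a γ ih =>
    rw [List.forall_mem_cons] at hγ
    rw [List.cons_append, ai_cons, ih hγ.2, admInvFrom_append_cons hγ.1 hγ.2 hβ, ai_cons,
      crossInv_cons, List.length_cons]
    split_ifs <;> omega

theorem aid_append_cons {γ β : List ℕ} {m : ℕ} (hγ : ∀ a ∈ γ, m < a) (hβ : ∀ b ∈ β, m < b) :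
    aid (γ ++ m :: β) = aid γ + aid β + (if γ = [] then 0 else 1)
      + (if β = [] then 0 else γ.length) + crossInv γ β := by
  rw [aid, aid, aid, ai_append_cons hγ hβ, des_append_cons hγ hβ]
  omega

theorem aid_nil : aid [] = 0 := rfl

theorem aid_cons_of_forall_lt {m : ℕ} {β : List ℕ} (hβ : ∀ b ∈ β, m < b) :
    aid (m :: β) = aid β := by
  rw [aid, aid, ai_cons, admInvFrom_eq_zero hβ, des_cons_of_forall_lt hβ, add_zero]

theorem aid_singleton (a : ℕ) : aid [a] = 0 := rfl

theorem fkt_perm (k : ℕ) (τ : List ℕ) : (fkt k τ).Perm (k :: τ) := by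
  -- `fkt.induct` states the minimum as a fold over `xs.attach`; `List.foldr_attach` undoes that.
  induction τ using fkt.induct k with
  | case1 => rw [fkt]
  | case2 x xs hkm => simp only [List.foldr_attach] at hkm; rw [fkt, if_pos hkm]
  | case3 x xs hkm hα ih =>
    simp only [List.foldr_attach] at *
    have hsplit := List.takeWhile_append_cons_tail_dropWhile (List.foldr_min_mem x xs)
    rw [fkt, if_neg hkm, if_pos hα]
    rw [hα, List.nil_append] at hsplit
    conv_rhs => rw [← hsplit]
    exact (ih.append_right _).trans ((List.perm_append_singleton _ _).cons k)
  | case4 x xs hkm hα hβ =>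
    simp only [List.foldr_attach] at *
    have hsplit := List.takeWhile_append_cons_tail_dropWhile (List.foldr_min_mem x xs)
    rw [fkt, if_neg hkm, if_neg hα, if_pos hβ]
    rw [hβ] at hsplit
    conv_rhs => rw [← hsplit]
    exact (List.perm_append_singleton _ _).symm.cons k
  | case5 x xs hkm hα hβ ih =>
    simp only [List.foldr_attach] at *
    have hsplit := List.takeWhile_append_cons_tail_dropWhile (List.foldr_min_mem x xs)
    rw [fkt, if_neg hkm, if_neg hα, if_neg hβ]
    conv_rhs => rw [← hsplit]
    exact ih.append_right _

theorem fkt_of_forall_lt {k : ℕ} {τ : List ℕ} (h : ∀ a ∈ τ, k < a) : fkt k τ = k :: τ := by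
  cases τ with
  | nil => rw [fkt]
  | cons x xs => rw [fkt, if_pos (h _ (List.foldr_min_mem x xs))]

theorem fkt_append_cons {k m : ℕ} {α β : List ℕ} (hα : ∀ a ∈ α, m < a) (hβ : ∀ b ∈ β, m < b)
    (hmk : m < k) :
    fkt k (α ++ m :: β) = if α = [] then fkt k β ++ [m]
      else if β = [] then k :: m :: α else fkt k α ++ m :: β := by
  obtain ⟨x, xs, hxs⟩ := List.exists_cons_of_ne_nil (List.append_ne_nil_of_right_ne_nil α
    (List.cons_ne_nil m β))
  have hmin : xs.foldr min x = m := by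
    refine le_antisymm (List.foldr_min_le x xs m (hxs ▸ by simp)) ?_
    have := hxs ▸ List.foldr_min_mem x xs
    simp only [List.mem_append, List.mem_cons] at this
    rcases this with h | h | h
    exacts [(hα _ h).le, h.ge, (hβ _ h).le]
  have hp : ∀ a ∈ α, decide (a ≠ m) = true := fun a ha => by simpa using (hα a ha).ne'
  rw [hxs, fkt, hmin, ← hxs, List.takeWhile_append_of_pos hp, List.dropWhile_append_of_pos hp,
    if_neg hmk.not_gt]
  simp

theorem fkt_ne_nil (k : ℕ) (τ : List ℕ) : fkt k τ ≠ [] :=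
  fun h => List.cons_ne_nil k τ (h ▸ fkt_perm k τ).symm.eq_nil

theorem lt_of_mem_fkt {k m a : ℕ} {τ : List ℕ} (hmk : m < k) (hτ : ∀ b ∈ τ, m < b)
    (ha : a ∈ fkt k τ) : m < a := by
  rcases List.mem_cons.mp ((fkt_perm k τ).subset ha) with rfl | h
  exacts [hmk, hτ a h]

theorem aid_fkt_of_forall_lt {k : ℕ} {τ : List ℕ} (h : ∀ a ∈ τ, k < a) :
    aid (fkt k τ) = aid τ + τ.countP (· < k) := by
  rw [fkt_of_forall_lt h, aid_cons_of_forall_lt h,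
    List.countP_eq_zero.mpr fun a ha => by simpa using (h a ha).le, add_zero]

theorem aid_fkt_append_cons {k m : ℕ} {α β : List ℕ} (hα : ∀ a ∈ α, m < a)
    (hβ : ∀ b ∈ β, m < b) (hmk : m < k)
    (ihα : aid (fkt k α) = aid α + α.countP (· < k))
    (ihβ : aid (fkt k β) = aid β + β.countP (· < k)) :
    aid (fkt k (α ++ m :: β)) = aid (α ++ m :: β) + (α ++ m :: β).countP (· < k) := by
  rw [aid_append_cons hα hβ, List.countP_append, List.countP_cons, if_pos (decide_eq_true hmk),
    fkt_append_cons hα hβ hmk]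
  rcases eq_or_ne α [] with rfl | hα0
  · rw [if_pos rfl, aid_append_cons (fun a => lt_of_mem_fkt hmk hβ) (by simp), ihβ]
    simp [fkt_ne_nil, crossInv]
    omega
  rcases eq_or_ne β [] with rfl | hβ0
  · rw [if_neg hα0, if_pos rfl, show k :: m :: α = [k] ++ m :: α from rfl,
      aid_append_cons (by simpa using hmk) hα]
    simp [hα0, crossInv, aid_singleton, aid_nil]
    omega
  · have hperm := fkt_perm k α
    rw [if_neg hα0, if_neg hβ0, aid_append_cons (fun a => lt_of_mem_fkt hmk hα) hβ, ihα,
      hperm.length_eq, crossInv_eq_of_perm hperm, crossInv_cons]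
    simp [hα0, hβ0, fkt_ne_nil]
    omega

/-- `aid f(k,τ) = aid τ + |τ_{<k}|`. -/
theorem aid_fkt (k : ℕ) (τ : List ℕ) (hτ : τ.Nodup) (hk : k ∉ τ) :
    aid (fkt k τ) = aid τ + τ.countP (fun a => decide (a < k)) := by
  revert hk
  refine hτ.induction_on_min (motive := fun τ => k ∉ τ → aid (fkt k τ) = aid τ + τ.countP (· < k))
    (fun _ => by simp [fkt, aid_singleton, aid_nil]) fun α m β hα hβ ihα ihβ hk => ?_
  simp only [List.mem_append, List.mem_cons, not_or] at hk
  obtain ⟨hkα, hkm, hkβ⟩ := hk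
  rcases lt_or_gt_of_ne hkm with hkm | hmk
  · refine aid_fkt_of_forall_lt fun a ha => hkm.trans_le ?_
    simp only [List.mem_append, List.mem_cons] at ha
    rcases ha with h | rfl | h
    exacts [(hα a h).le, le_rfl, (hβ a h).le]
  · exact aid_fkt_append_cons hα hβ hmk (ihα hkα) (ihβ hkβ)

end PaperStats
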